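/- The Ackermann normal form of a positive natural number is unique: if m = F_{b_{k-1}}^{1+n_{k-1}} ∘ ... ∘ F_{b_0}^{1+n_0}(1) and m = F_{b'_{l-1}}^{1+n'_{l-1}} ∘ ... ∘ F_{b'_0}^{1+n'_0}(1) are both Ackermann normal forms, then k = l and (b_i, n_i) = (b'_i, n'_i) for all i < k. -/

import Mathlib

/-- The fast-growing hierarchy: `F 0 n = n + 1` and `F (b+1) n = (F b)^[1+n] n`. -/
def F : ℕ → ℕ → ℕ
  | 0, n => n + 1
  | b + 1, n => (F b)^[1 + n] n

/-- `evalANF [(b₀,n₀),…,(b_{k-1},n_{k-1})] = F_{b_{k-1}}^[1+n_{k-1}] ∘ ⋯ ∘ F_{b₀}^[1+n₀] (1)`: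
the list records the innermost pair first. -/
def evalANF (l : List (ℕ × ℕ)) : ℕ :=
  l.foldl (fun m p => (F p.1)^[1 + p.2] m) 1

/-- `l` is an Ackermann normal form: the indices `b_{k-1} < ⋯ < b₀` are strictly decreasing
along the list (which starts with the innermost pair `(b₀,n₀)`), and each exponent `n_i`
is smaller than the value of the composition of the earlier (inner) pairs applied to `1`. -/
def IsANF (l : List (ℕ × ℕ)) : Prop :=
  l.Chain' (fun p q => q.1 < p.1) ∧
  ∀ i (h : i < l.length), (l.get ⟨i, h⟩).2 < evalANF (l.take i)

/-!
Let `S c` be the set of values of normal forms all of whose indices are at least `c`.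
The heart of the proof is that `S c` is sparse with respect to `F c`: if `v < w` both lie in
`S c`, then `F c v ≤ w` (by induction on `v + w`, comparing outermost indices and inner
values of the two forms). Now take a nonempty normal form `m = F_b^[1+n] u` with `u ∈ S (b+1)`
and `n < u`. Then `m < F (b+1) u`, so by sparseness `u` is the largest element of `S (b+1)`
below `m`, and `m` itself is not in `S (b+1)`. Thus `b` is the largest `c` with `m ∈ S c`,
`u` is determined by `b` and `m`, and `n` by `b`, `u` and `m`; induction on the length finishes.
-/

lemma lt_F : ∀ b n, n < F b n
  | 0, n => Nat.lt_succ_self n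
  | b + 1, n => by
    show n < (F b)^[1 + n] n
    rw [Nat.add_comm, Function.iterate_succ_apply]
    exact (lt_F b n).trans_le (Function.id_le_iterate_of_id_le (fun x => (lt_F b x).le) n _)

lemma monotone_iterate_F (b : ℕ) : Monotone fun k => (F b)^[k] :=
  Function.monotone_iterate_of_id_le fun x => (lt_F b x).le

lemma F_strictMono : ∀ b, StrictMono (F b)
  | 0 => fun _ _ h => Nat.succ_lt_succ h
  | b + 1 => fun n m h =>
    calc (F b)^[1 + n] n < (F b)^[1 + n] m := ((F_strictMono b).iterate _) h
      _ ≤ (F b)^[1 + m] m := monotone_iterate_F b (by omega) m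

lemma strictMono_iterate_F (b x : ℕ) : StrictMono fun k => (F b)^[k] x :=
  (F_strictMono b).strictMono_iterate_of_lt_map (lt_F b x)

lemma lt_iterate_F (b n x : ℕ) : x < (F b)^[1 + n] x :=
  strictMono_iterate_F b x (by omega : 0 < 1 + n)

lemma monotone_F : Monotone F :=
  monotone_nat_of_le_succ fun b n => monotone_iterate_F b (by omega : 1 ≤ 1 + n) n

lemma F_le_iterate_F {c d : ℕ} (hcd : c ≤ d) (n u : ℕ) : F c u ≤ (F d)^[1 + n] u :=
  (monotone_F hcd u).trans (monotone_iterate_F d (by omega : 1 ≤ 1 + n) u)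

lemma F_iterate_F_le {c e : ℕ} (hce : c ≤ e) (k t : ℕ) : F c ((F e)^[k] t) ≤ (F e)^[k + 1] t :=
  (Function.iterate_succ_apply' (F e) k t).symm ▸ monotone_F hce _

lemma iterate_F_le_F_succ {b k u : ℕ} (hk : k ≤ 1 + u) : (F b)^[k] u ≤ F (b + 1) u :=
  monotone_iterate_F b hk u

lemma iterate_F_lt_F_succ {b k u : ℕ} (hk : k < 1 + u) : (F b)^[k] u < F (b + 1) u :=
  strictMono_iterate_F b u hk

/-- `m ∈ S c`: `m` is the value of an Ackermann normal form all of whose indices are `≥ c`. -/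
inductive HasANF : ℕ → ℕ → Prop
  | one (c : ℕ) : HasANF c 1
  | step {c d n u : ℕ} (hcd : c ≤ d) (hu : HasANF (d + 1) u) (hn : n < u) :
      HasANF c ((F d)^[1 + n] u)

namespace HasANF

lemma one_le {c m : ℕ} (h : HasANF c m) : 1 ≤ m := by
  induction h with
  | one => exact le_rfl
  | step _ _ _ ih => exact ih.trans (monotone_iterate_F _ (Nat.zero_le _) _)

lemma of_le {c c' m : ℕ} (h : HasANF c m) (hc : c' ≤ c) : HasANF c' m := by
  cases h with
  | one => exact one c'
  | step hcd hu hn => exact step (hc.trans hcd) hu hn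

lemma F_le_of_lt {c v w : ℕ} (hv : HasANF c v) (hw : HasANF c w) (hvw : v < w) :
    F c v ≤ w := by
  cases hw with
  | one => have := hv.one_le; omega
  | @step _ d n u hcd hu hnu =>
    have hwF : (F d)^[1 + n] u < F (d + 1) u := iterate_F_lt_F_succ (by omega)
    rcases le_or_gt v u with hvu | huv
    · exact ((F_strictMono c).monotone hvu).trans (F_le_iterate_F hcd n u)
    cases hv with
    | one => have := hu.one_le; omega
    | @step _ e p t hce ht hpt =>
      have htv : t < (F e)^[1 + p] t := lt_iterate_F e p t
      -- `w < F (d+1) u` and `v < F (e+1) t`; unless `e < d`, the induction hypothesis applied to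
      -- two of `t`, `u`, `v` contradicts `v < w`, except when `e = d` and `t = u`.
      rcases lt_trichotomy e d with hed | rfl | hde
      · have htw : F (e + 1) t ≤ (F d)^[1 + n] u :=
          F_le_of_lt ht ((step le_rfl hu hnu).of_le hed) (htv.trans hvw)
        calc F c ((F e)^[1 + p] t) ≤ (F e)^[1 + p + 1] t := F_iterate_F_le hce _ t
          _ ≤ F (e + 1) t := iterate_F_le_F_succ (by omega)
          _ ≤ _ := htw
      · have hvF : (F e)^[1 + p] t < F (e + 1) t := iterate_F_lt_F_succ (by omega)
        rcases lt_trichotomy t u with htu | rfl | hut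
        · have hFtu := F_le_of_lt ht hu htu
          omega
        · have hpn : 1 + p < 1 + n := (strictMono_iterate_F e t).lt_iff_lt.mp hvw
          calc F c ((F e)^[1 + p] t) ≤ (F e)^[1 + p + 1] t := F_iterate_F_le hce _ t
            _ ≤ (F e)^[1 + n] t := monotone_iterate_F e (by omega) t
        · have hFut := F_le_of_lt hu ht hut
          omega
      · have hFuv := F_le_of_lt hu ((step le_rfl ht hpt).of_le hde) huv
        omega
termination_by v + w
decreasing_by all_goals omega

lemma not_hasANF_succ {b n u : ℕ} (hu : HasANF (b + 1) u) (hn : n < u) :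
    ¬HasANF (b + 1) ((F b)^[1 + n] u) := fun hm =>
  (iterate_F_lt_F_succ (by omega)).not_ge
    (F_le_of_lt hu hm (lt_iterate_F b n u))

lemma le_of_lt_iterate_F {b n u x : ℕ} (hu : HasANF (b + 1) u) (hn : n < u)
    (hx : HasANF (b + 1) x) (hxm : x < (F b)^[1 + n] u) : x ≤ u := by
  by_contra! hux
  have hFux := F_le_of_lt hu hx hux
  have hmF := iterate_F_lt_F_succ (b := b) (by omega : 1 + n < 1 + u)
  omega

lemma le_of_iterate_F_eq {b b' n n' u u' : ℕ} (hu : HasANF (b + 1) u) (hn : n < u)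
    (hu' : HasANF (b' + 1) u') (hn' : n' < u') (h : (F b)^[1 + n] u = (F b')^[1 + n'] u') :
    b' ≤ b := by
  by_contra! hbb
  exact not_hasANF_succ hu hn (h ▸ (step le_rfl hu' hn').of_le hbb)

lemma iterate_F_inj {b b' n n' u u' : ℕ} (hu : HasANF (b + 1) u) (hn : n < u)
    (hu' : HasANF (b' + 1) u') (hn' : n' < u') (h : (F b)^[1 + n] u = (F b')^[1 + n'] u') :
    b = b' ∧ u = u' ∧ n = n' := by
  obtain rfl : b = b' :=
    (le_of_iterate_F_eq hu' hn' hu hn h.symm).antisymm (le_of_iterate_F_eq hu hn hu' hn' h)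
  have hum := lt_iterate_F b n u
  have hum' := lt_iterate_F b n' u'
  obtain rfl : u = u' :=
    (le_of_lt_iterate_F hu' hn' hu (h ▸ hum)).antisymm (le_of_lt_iterate_F hu hn hu' (h ▸ hum'))
  exact ⟨rfl, rfl, by simpa using (strictMono_iterate_F b u).injective h⟩

end HasANF

lemma evalANF_append_singleton (l : List (ℕ × ℕ)) (q : ℕ × ℕ) :
    evalANF (l ++ [q]) = (F q.1)^[1 + q.2] (evalANF l) := by
  simp [evalANF, List.foldl_append]

lemma IsANF.of_append_singleton {l : List (ℕ × ℕ)} {q : ℕ × ℕ} (h : IsANF (l ++ [q])) :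
    IsANF l ∧ q.2 < evalANF l ∧ ∀ p ∈ l, q.1 < p.1 := by
  obtain ⟨hchain, hexp⟩ := h
  have : IsTrans (ℕ × ℕ) (fun p q => q.1 < p.1) := ⟨fun _ _ _ h₁ h₂ => h₂.trans h₁⟩
  refine ⟨⟨(List.isChain_append.mp hchain).1, fun i hi => ?_⟩, ?_, fun p hp => ?_⟩
  · simpa [List.getElem_append_left hi, List.take_append_of_le_length hi.le]
      using hexp i (by simp; omega)
  · simpa using hexp l.length (by simp)
  · exact (List.pairwise_append.mp (List.isChain_iff_pairwise.mp hchain)).2.2 p hp q (by simp)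

lemma IsANF.hasANF {l : List (ℕ × ℕ)} {c : ℕ} (h : IsANF l) (hc : ∀ p ∈ l, c ≤ p.1) :
    HasANF c (evalANF l) := by
  induction l using List.reverseRecOn generalizing c with
  | nil => exact .one c
  | append_singleton l q ih =>
    obtain ⟨hl, hq, hlt⟩ := h.of_append_singleton
    rw [evalANF_append_singleton]
    exact .step (hc q (by simp)) (ih hl hlt) hq

lemma IsANF.eq_nil_of_evalANF_eq_one {l : List (ℕ × ℕ)} (h : IsANF l) (hl : evalANF l = 1) :
    l = [] := by
  obtain rfl | ⟨l, q, rfl⟩ := l.eq_nil_or_concat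
  · rfl
  rw [List.concat_eq_append] at h hl
  obtain ⟨hl', hq, hlt⟩ := h.of_append_singleton
  have h₁ := (hl'.hasANF hlt).one_le
  have h₂ := lt_iterate_F q.1 q.2 (evalANF l)
  rw [evalANF_append_singleton] at hl
  omega

theorem ackermannNormalForm_unique (l l' : List (ℕ × ℕ))
    (h : IsANF l) (h' : IsANF l') (heq : evalANF l = evalANF l') : l = l' := by
  induction l using List.reverseRecOn generalizing l' with
  | nil => exact (h'.eq_nil_of_evalANF_eq_one heq.symm).symm
  | append_singleton l q ih =>
    obtain rfl | ⟨l', q', rfl⟩ := l'.eq_nil_or_concat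
    · exact h.eq_nil_of_evalANF_eq_one heq
    simp only [List.concat_eq_append, evalANF_append_singleton] at h' heq ⊢
    obtain ⟨hl, hq, hlt⟩ := h.of_append_singleton
    obtain ⟨hl', hq', hlt'⟩ := h'.of_append_singleton
    obtain ⟨hb, hu, hn⟩ := HasANF.iterate_F_inj (hl.hasANF hlt) hq (hl'.hasANF hlt') hq' heq
    rw [ih l' hl hl' hu, Prod.ext hb hn]
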